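/- Let (X, G, Φ) be a dynamical system where X is a compact totally disconnected Hausdorff space. Then (X, G, Φ) is minimal if and only if (X, G, Φ) is conjugate to the inverse limit of an inverse system of dynamical systems, satisfying the Mittag-Leffler condition, each of whose terms is a minimal subshift (a closed shift-invariant subset of a full shift over some finite alphabet, with the shift G-action). -/

import Mathlib

open Set

universe u

/-! ### Dynamical systems: actions of a countable discrete group by homeomorphisms -/

/-- An action of a group `G` on a topological space `X`: each `act g` is a homeomorphism
(continuity of the inverse follows from `act g⁻¹`). -/
structure DynAction (G X : Type u) [Group G] [TopologicalSpace X] where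
  act : G → X → X
  continuous_act : ∀ g : G, Continuous (act g)
  act_one : ∀ x : X, act 1 x = x
  act_mul : ∀ (g g' : G) (x : X), act (g * g') x = act g (act g' x)

section Covers

variable {G X : Type u} [Group G] [TopologicalSpace X]

/-- A finite open cover of `X`. -/
def IsFOC (𝒰 : Finset (Set X)) : Prop :=
  (∀ U ∈ 𝒰, IsOpen U) ∧ ⋃₀ (𝒰 : Set (Set X)) = Set.univ

/-- A finite partition of `X` into nonempty clopen sets. -/
def IsClopenPartition (𝒰 : Finset (Set X)) : Prop :=
  (∀ U ∈ 𝒰, IsClopen U ∧ U.Nonempty) ∧ ⋃₀ (𝒰 : Set (Set X)) = Set.univ ∧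
    ∀ U ∈ 𝒰, ∀ V ∈ 𝒰, U ≠ V → U ∩ V = ∅

/-- `𝒱` refines `𝒰`: every member of `𝒱` is contained in a member of `𝒰`. -/
def Refines (𝒱 𝒰 : Finset (Set X)) : Prop :=
  ∀ V ∈ 𝒱, ∃ U ∈ 𝒰, V ⊆ U

/-- `{U g}` is a pattern of the `(S,𝒰)`-pseudo-orbit `{x g}`:
all `U g` belong to `𝒰`, and `x (s*g) ∈ U (s*g)` and `Φ_s (x g) ∈ U (s*g)`
for all `g ∈ G`, `s ∈ S`. -/
def IsPseudoOrbitPattern (Φ : DynAction G X) (S : Set G) (𝒰 : Finset (Set X))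
    (x : G → X) (U : G → Set X) : Prop :=
  (∀ g : G, U g ∈ 𝒰) ∧
    ∀ g : G, ∀ s ∈ S, x (s * g) ∈ U (s * g) ∧ Φ.act s (x g) ∈ U (s * g)

/-- `{x g}` is an `(S,𝒰)`-pseudo-orbit. -/
def IsPseudoOrbit (Φ : DynAction G X) (S : Set G) (𝒰 : Finset (Set X)) (x : G → X) : Prop :=
  ∃ U : G → Set X, IsPseudoOrbitPattern Φ S 𝒰 x U

/-- `z` `𝒰`-shadows the family `{x g}`. -/
def Shadows (Φ : DynAction G X) (𝒰 : Finset (Set X)) (z : X) (x : G → X) : Prop :=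
  ∀ g : G, ∃ U ∈ 𝒰, Φ.act g z ∈ U ∧ x g ∈ U

/-- The (topological) `S`-shadowing property. -/
def ShadowingProperty (Φ : DynAction G X) (S : Set G) : Prop :=
  ∀ 𝒰 : Finset (Set X), IsFOC 𝒰 → ∃ 𝒱 : Finset (Set X), IsFOC 𝒱 ∧
    ∀ x : G → X, IsPseudoOrbit Φ S 𝒱 x → ∃ z : X, Shadows Φ 𝒰 z x

/-! ### Equivariant maps, factor maps, conjugacies -/

def IsEquivariant {Y : Type u} [TopologicalSpace Y]
    (ΦX : DynAction G X) (ΦY : DynAction G Y) (f : X → Y) : Prop :=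
  ∀ (g : G) (x : X), f (ΦX.act g x) = ΦY.act g (f x)

/-- `f` is a factor map from `(X,G,ΦX)` onto `(Y,G,ΦY)`. -/
def IsFactorMap {Y : Type u} [TopologicalSpace Y]
    (ΦX : DynAction G X) (ΦY : DynAction G Y) (f : X → Y) : Prop :=
  Continuous f ∧ Function.Surjective f ∧ IsEquivariant ΦX ΦY f

/-- `f` is a conjugacy (bijective factor map). -/
def IsConjugacy {Y : Type u} [TopologicalSpace Y]
    (ΦX : DynAction G X) (ΦY : DynAction G Y) (f : X → Y) : Prop :=
  Continuous f ∧ Function.Bijective f ∧ IsEquivariant ΦX ΦY f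

end Covers

/-! ### Shifts, subshifts, shifts of finite type -/

/-- The shift action on `A^G`: `(σ_g x) h = x (h * g)`. -/
def shift (G A : Type u) [Group G] (g : G) (x : G → A) : G → A :=
  fun h => x (h * g)

/-- The full shift `A^G` (product topology) as a dynamical system. -/
def shiftDyn (G A : Type u) [Group G] [TopologicalSpace A] : DynAction G (G → A) where
  act := shift G A
  continuous_act g := continuous_pi fun h => continuous_apply (h * g)
  act_one x := by funext h; simp [shift]
  act_mul g g' x := by funext h; simp [shift, mul_assoc]

/-- A subshift: a closed shift-invariant subset of the full shift `A^G`. -/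
def IsSubshift {G A : Type u} [Group G] [TopologicalSpace A] (Y : Set (G → A)) : Prop :=
  IsClosed Y ∧ ∀ g : G, ∀ x ∈ Y, shift G A g x ∈ Y

/-- The cylinder set determined by the values of `P` on the finite shape `B`. -/
def cylinder {G A : Type u} (B : Finset G) (P : G → A) : Set (G → A) :=
  {y | ∀ b ∈ B, y b = P b}

/-- The language of `Y ⊆ A^G` over the finite shape `B` (a pattern is recorded by any
function `G → A` with the prescribed values on `B`). -/
def language {G A : Type u} (B : Finset G) (Y : Set (G → A)) : Set (G → A) :=
  {P | (cylinder B P ∩ Y).Nonempty}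

/-- `Y` is a shift of finite type over the finite shape `B`: it is cut out by a family of
forbidden patterns on `B`. -/
def IsSFTOver {G A : Type u} [Group G] (B : Finset G) (Y : Set (G → A)) : Prop :=
  ∃ ℱ : Set (G → A), Y = {x | ∀ g : G, ∀ P ∈ ℱ, shift G A g x ∉ cylinder B P}

/-- The shift action restricted to a subshift. -/
def subshiftDyn {G A : Type u} [Group G] [TopologicalSpace A] (Y : Set (G → A))
    (hY : IsSubshift Y) : DynAction G ↥Y where
  act g x := ⟨shift G A g x.1, hY.2 g x.1 x.2⟩
  continuous_act g := Continuous.subtype_mk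
    ((continuous_pi fun h => continuous_apply (h * g)).comp continuous_subtype_val) _
  act_one x := by apply Subtype.ext; funext h; simp [shift]
  act_mul g g' x := by apply Subtype.ext; funext h; simp [shift, mul_assoc]

/-! ### Hitting time sets and mixing-type properties -/

section Mixing

variable {G X : Type u} [Group G] [TopologicalSpace X]

/-- The hitting time set `N(U,V) = {g ≠ e : U ∩ Φ_{g⁻¹}(V) ≠ ∅}`. -/
def hittingTimes (Φ : DynAction G X) (U V : Set X) : Set G :=
  {g : G | g ≠ 1 ∧ (U ∩ Φ.act g⁻¹ '' V).Nonempty}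

/-- Topological mixing: `G \ N(U,V)` is finite for all nonempty open `U, V`. -/
def IsMixing (Φ : DynAction G X) : Prop :=
  ∀ U V : Set X, IsOpen U → IsOpen V → U.Nonempty → V.Nonempty →
    ((hittingTimes Φ U V)ᶜ : Set G).Finite

/-- Minimality: there is no nonempty proper closed invariant subset. -/
def IsMinimal (Φ : DynAction G X) : Prop :=
  ∀ K : Set X, IsClosed K → (∀ g : G, ∀ x ∈ K, Φ.act g x ∈ K) →
    K = ∅ ∨ K = Set.univ

end Mixing

/-! ### Inverse systems of subshifts -/

/-- An inverse system of dynamical systems whose terms are subshifts over finite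
(discrete) alphabets, with the shift `G`-action. -/
structure SubshiftInvSys (G : Type u) [Group G] (Λ : Type u) [Preorder Λ] where
  A : Λ → Type u
  [topoA : ∀ l, TopologicalSpace (A l)]
  [discA : ∀ l, DiscreteTopology (A l)]
  [finA : ∀ l, Finite (A l)]
  Y : ∀ l : Λ, Set (G → A l)
  subshift : ∀ l : Λ, IsSubshift (Y l)
  bond : ∀ {l m : Λ}, l ≤ m → ↥(Y m) → ↥(Y l)
  bond_cont : ∀ {l m : Λ} (h : l ≤ m), Continuous (bond h)
  bond_refl : ∀ (l : Λ) (x : ↥(Y l)), bond (le_refl l) x = x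
  bond_comp : ∀ {l m n : Λ} (h1 : l ≤ m) (h2 : m ≤ n) (x : ↥(Y n)),
    bond h1 (bond h2 x) = bond (h1.trans h2) x
  bond_equivariant : ∀ {l m : Λ} (h : l ≤ m) (g : G) (x : ↥(Y m)),
    (subshiftDyn (Y l) (subshift l)).act g (bond h x)
      = bond h ((subshiftDyn (Y m) (subshift m)).act g x)

namespace SubshiftInvSys

variable {G Λ : Type u} [Group G] [Preorder Λ]

instance (𝒮 : SubshiftInvSys G Λ) (l : Λ) : TopologicalSpace (𝒮.A l) := 𝒮.topoA l
instance (𝒮 : SubshiftInvSys G Λ) (l : Λ) : DiscreteTopology (𝒮.A l) := 𝒮.discA l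
instance (𝒮 : SubshiftInvSys G Λ) (l : Λ) : Finite (𝒮.A l) := 𝒮.finA l

/-- The `G`-action on the term `Y l` (the restricted shift). -/
def termDyn (𝒮 : SubshiftInvSys G Λ) (l : Λ) : DynAction G ↥(𝒮.Y l) :=
  subshiftDyn (𝒮.Y l) (𝒮.subshift l)

/-- The inverse limit of the system, as a subset of the product. -/
def limitSet (𝒮 : SubshiftInvSys G Λ) : Set (∀ l : Λ, ↥(𝒮.Y l)) :=
  {x | ∀ (l m : Λ) (h : l ≤ m), 𝒮.bond h (x m) = x l}

lemma act_mem_limitSet (𝒮 : SubshiftInvSys G Λ) (g : G) (x : ∀ l : Λ, ↥(𝒮.Y l))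
    (hx : x ∈ 𝒮.limitSet) : (fun l => (𝒮.termDyn l).act g (x l)) ∈ 𝒮.limitSet := by
  intro l m h
  show 𝒮.bond h ((𝒮.termDyn m).act g (x m)) = (𝒮.termDyn l).act g (x l)
  rw [show (𝒮.termDyn m).act g (x m)
        = (subshiftDyn (𝒮.Y m) (𝒮.subshift m)).act g (x m) from rfl,
      ← 𝒮.bond_equivariant h g (x m)]
  show (𝒮.termDyn l).act g (𝒮.bond h (x m)) = _
  rw [hx l m h]

/-- The induced `G`-action `σ*` on the inverse limit. -/
def limitDyn (𝒮 : SubshiftInvSys G Λ) : DynAction G ↥𝒮.limitSet where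
  act g x := ⟨fun l => (𝒮.termDyn l).act g (x.1 l), 𝒮.act_mem_limitSet g x.1 x.2⟩
  continuous_act g := Continuous.subtype_mk
    (continuous_pi fun l => ((𝒮.termDyn l).continuous_act g).comp
      ((continuous_apply l).comp continuous_subtype_val)) _
  act_one x := by
    apply Subtype.ext; funext l
    exact (𝒮.termDyn l).act_one (x.1 l)
  act_mul g g' x := by
    apply Subtype.ext; funext l
    exact (𝒮.termDyn l).act_mul g g' (x.1 l)

/-- The Mittag-Leffler condition. -/
def ML (𝒮 : SubshiftInvSys G Λ) : Prop :=
  ∀ l : Λ, ∃ m : Λ, ∃ h : l ≤ m, ∀ (n : Λ) (h' : m ≤ n),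
    Set.range (𝒮.bond (h.trans h')) = Set.range (𝒮.bond h)

end SubshiftInvSys

/-- An inverse system of subshifts over some directed index set, packaged together
with its (directed, preordered) index. -/
structure SubshiftInvSysPkg (G : Type u) [Group G] where
  Idx : Type u
  [pre : Preorder Idx]
  directed : IsDirected Idx (· ≤ ·)
  sys : SubshiftInvSys G Idx

namespace SubshiftInvSysPkg

variable {G : Type u} [Group G]

instance (P : SubshiftInvSysPkg G) : Preorder P.Idx := P.pre

end SubshiftInvSysPkg

/-!
Forward direction: a finite family `S` of clopen sets codes each `x` by its itinerary
`g ↦ (U ∈ S ↦ [Φ_g x ∈ U])`, a point of the full shift over the finite alphabet `S → Bool`.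
The itineraries form a subshift which is a factor of `X`, hence minimal, and forgetting members
of `S` gives surjective bonding maps, so the system is Mittag-Leffler. Clopen sets separate the
points of a compact totally disconnected space, so `X` embeds into the inverse limit, and by
compactness every compatible family of itineraries is realised by a point.

Converse: a nonempty closed invariant set in an inverse limit of minimal systems projects onto
every term; the fibres over a point `z` then form a directed family of nonempty compact sets,
whose intersection shows `z` lies in the set.
-/

section Minimality

variable {G X Y : Type u} [Group G] [TopologicalSpace X] [TopologicalSpace Y]
  {ΦX : DynAction G X} {ΦY : DynAction G Y} {f : X → Y}

lemma IsMinimal.of_isFactorMap (hf : IsFactorMap ΦX ΦY f) (h : IsMinimal ΦX) :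
    IsMinimal ΦY := by
  intro K hK hKinv
  have hinv : ∀ g : G, ∀ x ∈ f ⁻¹' K, ΦX.act g x ∈ f ⁻¹' K := fun g x hx => by
    simpa only [Set.mem_preimage, hf.2.2 g x] using hKinv g _ hx
  rcases h _ (hK.preimage hf.1) hinv with h0 | h1
  · exact .inl (hf.2.1.preimage_injective (by rwa [Set.preimage_empty]))
  · exact .inr (hf.2.1.preimage_injective (by rwa [Set.preimage_univ]))

lemma IsMinimal.of_isConjugacy [CompactSpace X] [T2Space Y] (hf : IsConjugacy ΦX ΦY f)
    (h : IsMinimal ΦY) : IsMinimal ΦX := by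
  intro K hK hKinv
  have hinv : ∀ g : G, ∀ y ∈ f '' K, ΦY.act g y ∈ f '' K := by
    rintro g _ ⟨x, hx, rfl⟩
    exact ⟨ΦX.act g x, hKinv g x hx, hf.2.2 g x⟩
  rcases h _ (hK.isCompact.image hf.1).isClosed hinv with h0 | h1
  · exact .inl (Set.image_eq_empty.mp h0)
  · right
    rw [← hf.2.1.1.preimage_image K, h1, Set.preimage_univ]

end Minimality

namespace SubshiftInvSys

variable {G Λ : Type u} [Group G] [Preorder Λ] (𝒮 : SubshiftInvSys G Λ)

instance compactSpace_Y (l : Λ) : CompactSpace ↥(𝒮.Y l) :=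
  isCompact_iff_compactSpace.mp (𝒮.subshift l).1.isCompact

lemma isClosed_limitSet : IsClosed 𝒮.limitSet := by
  simp only [limitSet, Set.ofPred_forall]
  exact isClosed_iInter fun l => isClosed_iInter fun m => isClosed_iInter fun h =>
    isClosed_eq ((𝒮.bond_cont h).comp (continuous_apply m)) (continuous_apply l)

instance compactSpace_limitSet : CompactSpace ↥𝒮.limitSet :=
  isCompact_iff_compactSpace.mp 𝒮.isClosed_limitSet.isCompact

def proj (l : Λ) (x : ↥𝒮.limitSet) : ↥(𝒮.Y l) := x.1 l

lemma continuous_proj (l : Λ) : Continuous (𝒮.proj l) :=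
  (continuous_apply l).comp continuous_subtype_val

lemma bond_proj {l m : Λ} (h : l ≤ m) (x : ↥𝒮.limitSet) : 𝒮.bond h (𝒮.proj m x) = 𝒮.proj l x :=
  x.2 l m h

lemma ml_of_bond_surjective (h : ∀ {l m : Λ} (hlm : l ≤ m), Function.Surjective (𝒮.bond hlm)) :
    𝒮.ML :=
  fun l => ⟨l, le_rfl, fun _ _ => by rw [(h _).range_eq, (h _).range_eq]⟩

lemma mem_of_forall_proj_mem_image [IsDirectedOrder Λ] [Nonempty Λ] {K : Set ↥𝒮.limitSet}
    (hK : IsClosed K) {z : ↥𝒮.limitSet} (hz : ∀ l, 𝒮.proj l z ∈ 𝒮.proj l '' K) : z ∈ K := by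
  let C : Λ → Set ↥𝒮.limitSet := fun l => K ∩ 𝒮.proj l ⁻¹' {𝒮.proj l z}
  have hC_anti : Antitone C := by
    rintro l m hlm k ⟨hkK, hkz⟩
    refine ⟨hkK, ?_⟩
    simp only [Set.mem_preimage, Set.mem_singleton_iff] at hkz ⊢
    rw [← 𝒮.bond_proj hlm, hkz, 𝒮.bond_proj]
  have hC_closed (l : Λ) : IsClosed (C l) :=
    hK.inter (isClosed_singleton.preimage (𝒮.continuous_proj l))
  have hC_nonempty (l : Λ) : (C l).Nonempty := by
    obtain ⟨k, hk, hkz⟩ := hz l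
    exact ⟨k, hk, hkz⟩
  obtain ⟨k, hk⟩ := IsCompact.nonempty_iInter_of_directed_nonempty_isCompact_isClosed C
    hC_anti.directed_ge hC_nonempty (fun l => (hC_closed l).isCompact) hC_closed
  rw [Set.mem_iInter] at hk
  have hkz : k = z := Subtype.ext (funext fun l => (hk l).2)
  exact hkz ▸ (hk (Classical.arbitrary Λ)).1

lemma isMinimal_limitDyn [IsDirectedOrder Λ] (hmin : ∀ l, IsMinimal (𝒮.termDyn l)) :
    IsMinimal 𝒮.limitDyn := by
  intro K hK hKinv
  rcases K.eq_empty_or_nonempty with hK0 | ⟨k₀, hk₀⟩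
  · exact .inl hK0
  refine .inr (Set.eq_univ_of_forall fun z => ?_)
  cases isEmpty_or_nonempty Λ
  · have hz : z = k₀ := Subtype.ext (funext isEmptyElim)
    exact hz ▸ hk₀
  refine 𝒮.mem_of_forall_proj_mem_image hK fun l => ?_
  have hinv : ∀ g : G, ∀ y ∈ 𝒮.proj l '' K, (𝒮.termDyn l).act g y ∈ 𝒮.proj l '' K := by
    rintro g _ ⟨k, hk, rfl⟩
    exact ⟨_, hKinv g k hk, rfl⟩
  rcases hmin l _ (hK.isCompact.image (𝒮.continuous_proj l)).isClosed hinv with h0 | h1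
  · exact absurd h0 (Set.Nonempty.image _ ⟨k₀, hk₀⟩).ne_empty
  · exact h1 ▸ Set.mem_univ _

end SubshiftInvSys

section Itinerary

variable {G X : Type u} [Group G] [TopologicalSpace X]

abbrev FinClopens (X : Type u) [TopologicalSpace X] := Finset {U : Set X // IsClopen U}

noncomputable def itinerary (Φ : DynAction G X) (S : FinClopens X) (x : X) :
    G → (↥S → Bool) :=
  fun g U => U.1.1.boolIndicator (Φ.act g x)

lemma continuous_itinerary (Φ : DynAction G X) (S : FinClopens X) :
    Continuous (itinerary Φ S) :=
  continuous_pi fun g => continuous_pi fun U =>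
    ((continuous_boolIndicator_iff_isClopen _).mpr U.1.2).comp (Φ.continuous_act g)

lemma shift_itinerary (Φ : DynAction G X) (S : FinClopens X) (g : G) (x : X) :
    shift G (↥S → Bool) g (itinerary Φ S x) = itinerary Φ S (Φ.act g x) := by
  funext h U
  simp only [shift, itinerary, Φ.act_mul]

lemma itinerary_restrict (Φ : DynAction G X) {S T : FinClopens X} (hST : S ⊆ T) (x : X) :
    (fun g (U : ↥S) => itinerary Φ T x g ⟨U.1, hST U.2⟩) = itinerary Φ S x :=
  rfl

lemma eq_of_forall_itinerary_eq [TotallySeparatedSpace X] (Φ : DynAction G X) {x y : X}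
    (h : ∀ S, itinerary Φ S x = itinerary Φ S y) : x = y := by
  by_contra hxy
  obtain ⟨U, hU, hxU, hyU⟩ := exists_isClopen_of_totally_separated hxy
  have hxy₁ := congrFun (congrFun (h {⟨U, hU⟩}) 1) ⟨⟨U, hU⟩, Finset.mem_singleton_self _⟩
  simp only [itinerary, Φ.act_one] at hxy₁
  exact hyU ((U.mem_iff_boolIndicator y).mpr (hxy₁ ▸ (U.mem_iff_boolIndicator x).mp hxU))

lemma isSubshift_range_itinerary [CompactSpace X] (Φ : DynAction G X) (S : FinClopens X) :
    IsSubshift (Set.range (itinerary Φ S)) := by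
  refine ⟨(isCompact_range (continuous_itinerary Φ S)).isClosed, ?_⟩
  rintro g _ ⟨x, rfl⟩
  exact ⟨Φ.act g x, (shift_itinerary Φ S g x).symm⟩

noncomputable abbrev itinerarySystem [CompactSpace X] (Φ : DynAction G X) :
    SubshiftInvSys G (FinClopens X) where
  A S := ↥S → Bool
  Y S := Set.range (itinerary Φ S)
  subshift S := isSubshift_range_itinerary Φ S
  bond {S T} hST y := ⟨fun g U => y.1 g ⟨U.1, hST U.2⟩, by
    obtain ⟨x, hx⟩ := y.2
    exact ⟨x, hx ▸ itinerary_restrict Φ hST x⟩⟩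
  bond_cont {S T} hST := by
    refine Continuous.subtype_mk (continuous_pi fun g => continuous_pi fun U => ?_) _
    exact (continuous_apply _).comp ((continuous_apply g).comp continuous_subtype_val)
  bond_refl _ _ := rfl
  bond_comp _ _ _ := rfl
  bond_equivariant _ _ _ := rfl

variable [CompactSpace X] (Φ : DynAction G X)

lemma itinerarySystem_bond_surjective {S T : FinClopens X} (hST : S ≤ T) :
    Function.Surjective ((itinerarySystem Φ).bond hST) := by
  rintro ⟨_, x, rfl⟩
  exact ⟨⟨itinerary Φ T x, x, rfl⟩, rfl⟩

lemma isFactorMap_itinerary (S : FinClopens X) :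
    IsFactorMap Φ ((itinerarySystem Φ).termDyn S)
      (fun x => (⟨itinerary Φ S x, x, rfl⟩ : ↥(Set.range (itinerary Φ S)))) := by
  refine ⟨(continuous_itinerary Φ S).subtype_mk _, ?_, ?_⟩
  · rintro ⟨_, x, rfl⟩
    exact ⟨x, rfl⟩
  · intro g x
    exact Subtype.ext (shift_itinerary Φ S g x).symm

noncomputable abbrev toItineraryLimit (x : X) : ↥(itinerarySystem Φ).limitSet :=
  ⟨fun S => ⟨itinerary Φ S x, x, rfl⟩, fun _ _ _ => rfl⟩

lemma toItineraryLimit_surjective : Function.Surjective (toItineraryLimit Φ) := by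
  intro z
  let C : FinClopens X → Set X := fun S => itinerary Φ S ⁻¹' {(z.1 S).1}
  have hC_anti : Antitone C := by
    intro S T hST x hx
    simp only [C, Set.mem_preimage, Set.mem_singleton_iff] at hx ⊢
    rw [← itinerary_restrict Φ hST, hx]
    exact congrArg Subtype.val (z.2 S T hST)
  have hC_closed (S : FinClopens X) : IsClosed (C S) :=
    isClosed_singleton.preimage (continuous_itinerary Φ S)
  obtain ⟨x, hx⟩ := IsCompact.nonempty_iInter_of_directed_nonempty_isCompact_isClosed C
    hC_anti.directed_ge (fun S => (z.1 S).2) (fun S => (hC_closed S).isCompact) hC_closed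
  rw [Set.mem_iInter] at hx
  exact ⟨x, Subtype.ext (funext fun S => Subtype.ext (hx S))⟩

lemma isConjugacy_toItineraryLimit [TotallySeparatedSpace X] :
    IsConjugacy Φ (itinerarySystem Φ).limitDyn (toItineraryLimit Φ) := by
  refine ⟨?_, ⟨fun x y hxy => ?_, toItineraryLimit_surjective Φ⟩, fun g x => ?_⟩
  · exact Continuous.subtype_mk (continuous_pi fun S =>
      (continuous_itinerary Φ S).subtype_mk _) _
  · exact eq_of_forall_itinerary_eq Φ fun S =>
      congrArg Subtype.val (congrFun (congrArg Subtype.val hxy) S)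
  · exact Subtype.ext (funext fun S => Subtype.ext (shift_itinerary Φ S g x).symm)

end Itinerary

theorem minimal_iff_conjugate_invlim_minimal_subshifts_general
    {G X : Type} [Group G] [TopologicalSpace X]
    [CompactSpace X] [T2Space X] [TotallyDisconnectedSpace X]
    (Φ : DynAction G X) :
    IsMinimal Φ ↔
      ∃ P : SubshiftInvSysPkg G,
        P.sys.ML ∧
        (∀ l : P.Idx, IsMinimal (P.sys.termDyn l)) ∧
        ∃ f : X → ↥P.sys.limitSet, IsConjugacy Φ P.sys.limitDyn f := by
  constructor
  · intro hmin
    exact ⟨⟨FinClopens X, inferInstance, itinerarySystem Φ⟩,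
      (itinerarySystem Φ).ml_of_bond_surjective (itinerarySystem_bond_surjective Φ),
      fun S => hmin.of_isFactorMap (isFactorMap_itinerary Φ S),
      toItineraryLimit Φ, isConjugacy_toItineraryLimit Φ⟩
  · rintro ⟨P, -, hmin, f, hf⟩
    have := P.directed
    exact IsMinimal.of_isConjugacy hf (P.sys.isMinimal_limitDyn hmin)

/-- **Theorem 1.4 (minimal case).** For a compact totally disconnected Hausdorff space,
`Φ` is minimal iff `(X,G,Φ)` is conjugate to the inverse limit of an ML inverse system of
minimal subshifts. -/
theorem minimal_iff_conjugate_invlim_minimal_subshifts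
    {G X : Type} [Group G] [Countable G] [TopologicalSpace X]
    [CompactSpace X] [T2Space X] [TotallyDisconnectedSpace X]
    (Φ : DynAction G X) :
    IsMinimal Φ ↔
      ∃ P : SubshiftInvSysPkg G,
        P.sys.ML ∧
        (∀ l : P.Idx, IsMinimal (P.sys.termDyn l)) ∧
        ∃ f : X → ↥P.sys.limitSet, IsConjugacy Φ P.sys.limitDyn f :=
  minimal_iff_conjugate_invlim_minimal_subshifts_general Φ
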